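/- arXiv:1607.04370 — 2 statements merged into one kernel-verified Lean document; each statement's English description precedes it below -/
import Mathlib

section
/- Assume the Strong Reflection Principle (SRP). Then the non-stationary ideal on ω₁ is saturated; that is, there does not exist a family {A_α : α < ω₂} of stationary subsets of ω₁ such that A_α ∩ A_β is non-stationary for every α ≠ β < ω₂. -/
universe u

/-- The first uncountable ordinal, `ω₁`. -/
noncomputable def omega1 : Ordinal.{u} := (Cardinal.aleph 1).ord

/-- `C` is club (closed unbounded) in `[A]^{<ω₁}`, the collection of countable subsets of `A`:
every member of `C` is a countable subset of `A`, every countable subset of `A` is included in a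
member of `C` (cofinality), and `C` is closed under unions of countable increasing chains. -/
def ClubOn {X : Type u} (A : Set X) (C : Set (Set X)) : Prop :=
  (∀ c ∈ C, c ⊆ A ∧ c.Countable) ∧
  (∀ s : Set X, s ⊆ A → s.Countable → ∃ c ∈ C, s ⊆ c) ∧
  (∀ f : ℕ → Set X, (∀ n, f n ∈ C) → Monotone f → (⋃ n, f n) ∈ C)

/-- `S` is stationary in `[A]^{<ω₁}`: it meets every club. -/
def StationaryOn {X : Type u} (A : Set X) (S : Set (Set X)) : Prop :=
  ∀ C, ClubOn A C → (S ∩ C).Nonempty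

/-- `C` is a club (closed unbounded set) of ordinals below `κ`:
`C ⊆ κ`, `C` is unbounded in `κ`, and `C` contains each of its limit points below `κ`. -/
def OrdClub (κ : Ordinal.{u}) (C : Set Ordinal.{u}) : Prop :=
  C ⊆ Set.Iio κ ∧ (∀ o < κ, ∃ c ∈ C, o ≤ c) ∧
  (∀ o < κ, o ≠ 0 → (∀ b < o, ∃ c ∈ C, b < c ∧ c < o) → o ∈ C)

/-- `S` is a stationary set of ordinals below `κ`: it meets every club below `κ`. -/
def OrdStationary (κ : Ordinal.{u}) (S : Set Ordinal.{u}) : Prop :=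
  S ⊆ Set.Iio κ ∧ ∀ C, OrdClub κ C → (S ∩ C).Nonempty

/-- The Strong Reflection Principle (SRP): suppose `λ ≥ ℵ₂` and `Z ⊆ P_{ω₁}(λ)` is such that
for each stationary `T ⊆ ω₁` the set `{σ ∈ Z : σ ∩ ω₁ ∈ T}` is stationary in `P_{ω₁}(λ)`;
then for every `X ⊆ λ` of cardinality `ℵ₁` there is `Y ⊆ λ` with `X ⊆ Y`, `|Y| = ℵ₁`,
and `Z ∩ P_{ω₁}(Y)` containing a club of `P_{ω₁}(Y)`.  (Here `λ` is identified with the set of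
ordinals below `λ.ord`, and `σ ∩ ω₁ ∈ T` means that `σ ∩ ω₁` is an ordinal `δ ∈ T`, i.e.
`σ ∩ ω₁ = Iio δ`.) -/
def SRP : Prop :=
  ∀ lam : Cardinal.{u}, Cardinal.aleph 2 ≤ lam →
    ∀ Z : Set (Set Ordinal.{u}),
      (∀ σ ∈ Z, σ ⊆ Set.Iio lam.ord ∧ σ.Countable) →
      (∀ T : Set Ordinal.{u}, OrdStationary omega1 T →
        StationaryOn (Set.Iio lam.ord)
          {σ ∈ Z | ∃ δ ∈ T, σ ∩ Set.Iio omega1 = Set.Iio δ}) →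
      ∀ X : Set Ordinal.{u}, X ⊆ Set.Iio lam.ord → Cardinal.mk X = Cardinal.aleph 1 →
        ∃ Y : Set Ordinal.{u}, X ⊆ Y ∧ Y ⊆ Set.Iio lam.ord ∧
          Cardinal.mk Y = Cardinal.aleph 1 ∧ ∃ D ⊆ Z, ClubOn Y D

/-!
Extend `{A_α : α < ω₂}` to a maximal antichain `𝒜` of stationary sets, enumerated as `g β`
(`β < λ`). The set `Z` of countable `σ ⊆ λ` with `σ ∩ ω₁ = δ ∈ g β` for some `β ∈ σ` is
projectively stationary: given a stationary `T`, some `g β` meets `T` stationarily, and the union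
`σ` of an initial segment of a continuous chain through a club, started at `β`, has
`σ ∩ ω₁ ∈ T ∩ g β` for a stationary set of lengths. SRP reflects `Z` to some `Y ⊇ ω₁` of size
`ℵ₁`. Only `ℵ₁` many `g y` have `y ∈ Y`, so some `A_γ` differs from all of them and meets each
of them non-stationarily. A chain of length `δ ∈ A_γ` through the club in `Z ∩ P_{ω₁}(Y)`, with
`δ` in the diagonal intersection of clubs avoiding the sets `A_γ ∩ g y`, gives a `σ ∈ Z` whose
witness `β ∈ σ` is enumerated below `δ`, so `δ ∈ A_γ ∩ g β` contradicts the choice of `δ`.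
-/

universe w

open Cardinal Ordinal Set Filter

theorem omega1_eq_omega_one : omega1.{u} = ω₁ :=
  ord_aleph 1

theorem omega1_isSuccLimit : Order.IsSuccLimit omega1.{u} :=
  isSuccLimit_ord (aleph0_le_aleph 1)

theorem mk_Iio_omega1 : #(Iio omega1.{u}) = ℵ₁ := by
  rw [omega1, Cardinal.mk_Iio_ordinal, card_ord, lift_aleph, Ordinal.lift_one]

theorem countable_Iio_of_lt_omega1 {ξ : Ordinal.{u}} (hξ : ξ < omega1) : (Iio ξ).Countable := by
  rw [← le_aleph0_iff_set_countable, Cardinal.mk_Iio_ordinal, ← lift_aleph0.{u + 1, u},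
    Cardinal.lift_le, ← Order.lt_succ_iff, succ_aleph0, ← lt_ord]
  exact hξ

theorem countable_Iic_of_lt_omega1 {ξ : Ordinal.{u}} (hξ : ξ < omega1) : (Iic ξ).Countable :=
  (Iio_insert (a := ξ)) ▸ (countable_Iio_of_lt_omega1 hξ).insert ξ

theorem exists_lt_omega1_subset_Iio {s : Set Ordinal.{u}} (hs : s ⊆ Iio omega1)
    (hc : s.Countable) : ∃ b < omega1.{u}, s ⊆ Iio b := by
  have : Countable s := hc.to_subtype
  refine ⟨⨆ x : s, (x : Ordinal) + 1, ?_, fun x hx => ?_⟩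
  · rw [omega1_eq_omega_one] at hs ⊢
    exact iSup_lt_omega_one fun x =>
      (omega1_eq_omega_one ▸ omega1_isSuccLimit).add_one_lt (hs x.2)
  · exact (Order.lt_add_one_iff.2 le_rfl).trans_le
      (Ordinal.le_iSup (fun x : s => (x : Ordinal) + 1) ⟨x, hx⟩)

theorem exists_lt_omega1_subset_image {β : Type w} {y : Ordinal.{u} → β} {t : Set β}
    (ht : t ⊆ y '' Iio omega1) (hc : t.Countable) : ∃ b < omega1.{u}, t ⊆ y '' Iio b := by
  choose! η hη hyη using fun x (hx : x ∈ t) => ht hx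
  obtain ⟨b, hb, hηb⟩ := exists_lt_omega1_subset_Iio (s := η '' t)
    (image_subset_iff.2 hη) (hc.image η)
  exact ⟨b, hb, fun x hx => ⟨η x, hηb (mem_image_of_mem η hx), hyη x hx⟩⟩

def closurePoints (H : Ordinal.{u} → Ordinal.{u}) : Set Ordinal.{u} :=
  {δ | δ < omega1 ∧ 0 < δ ∧ ∀ ξ < δ, H ξ < δ}

theorem ordClub_closurePoints {H : Ordinal.{u} → Ordinal.{u}}
    (hH : ∀ ξ < omega1, H ξ < omega1) : OrdClub omega1 (closurePoints H) := by
  refine ⟨fun δ hδ => hδ.1, fun o ho => ?_,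
    fun o ho ho0 hlim => ⟨ho, pos_iff_ne_zero.2 ho0, ?_⟩⟩
  · -- `g β` bounds `β` and `H` on `Iio β`, so the supremum of the iterates of `g` is closed
    -- under `H`
    choose! g hg hβg using fun β (hβ : β < omega1) => exists_lt_omega1_subset_Iio
      (s := insert β (H '' Iio β))
      (insert_subset hβ (image_subset_iff.2 fun ξ hξ => hH ξ (hξ.trans hβ)))
      (((countable_Iio_of_lt_omega1 hβ).image H).insert β)
    have hδ : nfp g o < omega1 :=
      nfp_lt_ord_of_isRegular isRegular_aleph_one aleph0_lt_aleph_one.ne' hg ho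
    refine ⟨nfp g o, ⟨hδ, ?_, fun ξ hξ => ?_⟩, le_nfp g o⟩
    · exact (zero_le (a := o)).trans_lt
        ((hβg o ho (mem_insert o _)).trans_le (iterate_le_nfp g o 1))
    · obtain ⟨n, hn⟩ := lt_nfp_iff.1 hξ
      calc H ξ < g (g^[n] o) :=
            hβg _ ((iterate_le_nfp g o n).trans_lt hδ)
              (mem_insert_of_mem _ (mem_image_of_mem H hn))
        _ = g^[n + 1] o := (Function.iterate_succ_apply' g n o).symm
        _ ≤ nfp g o := iterate_le_nfp g o (n + 1)
  · intro ξ hξ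
    obtain ⟨c, hc, hξc, hco⟩ := hlim ξ hξ
    exact (hc.2.2 ξ hξc).trans hco

/-- The club filter on `ω₁`: by `OrdClub.eventually_mem`, every club contains the closure points
of some `H`. -/
def clubFilter : Filter Ordinal.{u} where
  sets := {s | ∃ H, (∀ ξ < omega1, H ξ < omega1) ∧ closurePoints H ⊆ s}
  univ_sets := ⟨fun _ => 0, fun _ _ => omega1_isSuccLimit.pos, subset_univ _⟩
  sets_of_superset := fun ⟨H, hH, hs⟩ hst => ⟨H, hH, hs.trans hst⟩
  inter_sets := fun ⟨H, hH, hs⟩ ⟨K, hK, ht⟩ =>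
    ⟨fun ξ => max (H ξ) (K ξ), fun ξ hξ => max_lt (hH ξ hξ) (hK ξ hξ), fun _ ⟨h1, h2, h3⟩ =>
      ⟨hs ⟨h1, h2, fun ξ hξ => (le_max_left _ _).trans_lt (h3 ξ hξ)⟩,
        ht ⟨h1, h2, fun ξ hξ => (le_max_right _ _).trans_lt (h3 ξ hξ)⟩⟩⟩

theorem eventually_clubFilter_iff {P : Ordinal.{u} → Prop} :
    (∀ᶠ δ in clubFilter, P δ) ↔
      ∃ H, (∀ ξ < omega1, H ξ < omega1) ∧ ∀ δ ∈ closurePoints H, P δ :=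
  Iff.rfl

theorem eventually_pos_lt_omega1 : ∀ᶠ δ in clubFilter, 0 < δ ∧ δ < omega1.{u} :=
  eventually_clubFilter_iff.2
    ⟨fun _ => 0, fun _ _ => omega1_isSuccLimit.pos, fun _ h => ⟨h.2.1, h.1⟩⟩

theorem OrdStationary.frequently_mem {S : Set Ordinal.{u}} (hS : OrdStationary omega1 S) :
    ∃ᶠ δ in clubFilter, δ ∈ S := fun h => by
  obtain ⟨H, hH, hHS⟩ := eventually_clubFilter_iff.1 h
  obtain ⟨δ, hδS, hδH⟩ := hS.2 _ (ordClub_closurePoints hH)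
  exact hHS δ hδH hδS

theorem OrdClub.eventually_mem {C : Set Ordinal.{u}} (hC : OrdClub omega1 C) :
    ∀ᶠ δ in clubFilter, δ ∈ C := by
  choose! H hHC hH using fun ξ (hξ : ξ < omega1) =>
    hC.2.1 (ξ + 1) (omega1_isSuccLimit.add_one_lt hξ)
  refine eventually_clubFilter_iff.2
    ⟨H, fun ξ hξ => hC.1 (hHC ξ hξ), fun δ ⟨hδ, hδ0, hδH⟩ => ?_⟩
  refine hC.2.2 δ hδ hδ0.ne' fun ξ hξ => ⟨H ξ, hHC ξ (hξ.trans hδ), ?_, hδH ξ hξ⟩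
  exact Order.lt_add_one_iff.2 le_rfl |>.trans_le (hH ξ (hξ.trans hδ))

theorem eventually_notMem_of_not_ordStationary {s : Set Ordinal.{u}} (hs : s ⊆ Iio omega1)
    (h : ¬ OrdStationary omega1 s) : ∀ᶠ δ in clubFilter, δ ∉ s := by
  obtain ⟨C, hC, hsC⟩ : ∃ C, OrdClub omega1 C ∧ ¬ (s ∩ C).Nonempty := by
    simpa [OrdStationary, hs] using h
  filter_upwards [hC.eventually_mem] with δ hδC hδs using hsC ⟨δ, hδs, hδC⟩

/-- Normality of the club filter: it is closed under diagonal intersections. -/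
theorem eventually_forall_lt_of_forall_eventually {P : Ordinal.{u} → Ordinal.{u} → Prop}
    (hP : ∀ η < omega1, ∀ᶠ δ in clubFilter, P η δ) :
    ∀ᶠ δ in clubFilter, ∀ η < δ, P η δ := by
  choose! H hH hHP using fun η (hη : η < omega1) => eventually_clubFilter_iff.1 (hP η hη)
  choose! K hK hHK using fun ξ (hξ : ξ < omega1) => exists_lt_omega1_subset_Iio
    (s := image2 H (Iic ξ) (Iic ξ))
    (image2_subset_iff.2 fun η hη ζ hζ => hH η (hη.trans_lt hξ) ζ (hζ.trans_lt hξ))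
    ((countable_Iic_of_lt_omega1 hξ).image2 (countable_Iic_of_lt_omega1 hξ) H)
  refine eventually_clubFilter_iff.2 ⟨K, hK, fun δ ⟨hδ, hδ0, hδK⟩ η hη => ?_⟩
  refine hHP η (hη.trans hδ) δ ⟨hδ, hδ0, fun ζ hζ => ?_⟩
  exact (hHK _ ((max_lt hη hζ).trans hδ)
    (mem_image2_of_mem (le_max_left η ζ) (le_max_right η ζ))).trans (hδK _ (max_lt hη hζ))

theorem eventually_biUnion_subset_image {β : Type w} {N : Ordinal.{u} → Set β}
    {y : Ordinal.{u} → β} (hN : ∀ ξ < omega1, (N ξ).Countable ∧ N ξ ⊆ y '' Iio omega1) :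
    ∀ᶠ δ in clubFilter, (⋃ ξ < δ, N ξ) ⊆ y '' Iio δ := by
  choose! H hH hNH using fun ξ (hξ : ξ < omega1) =>
    exists_lt_omega1_subset_image (hN ξ hξ).2 (hN ξ hξ).1
  refine eventually_clubFilter_iff.2
    ⟨H, hH, fun δ ⟨hδ, _, hδH⟩ => iUnion₂_subset fun ξ hξ => ?_⟩
  exact (hNH ξ (hξ.trans hδ)).trans (image_mono (Iio_subset_Iio (hδH ξ hξ).le))

section Chain

variable {α : Type w} {A : Set α} {C : Set (Set α)}

noncomputable def transfiniteChain (next : Set α → Set α) (j : Ordinal.{u} → Set α) :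
    Ordinal.{u} → Set α :=
  Ordinal.lt_wf.fix fun ξ N => next ((⋃ η : Iio ξ, N η η.2) ∪ j ξ)

theorem transfiniteChain_eq (next : Set α → Set α) (j : Ordinal.{u} → Set α) (ξ : Ordinal.{u}) :
    transfiniteChain next j ξ = next ((⋃ η < ξ, transfiniteChain next j η) ∪ j ξ) := by
  rw [transfiniteChain, WellFounded.fix_eq, iUnion_subtype]
  rfl

theorem ClubOn.exists_chain (hC : ClubOn A C) {j : Ordinal.{u} → Set α}
    (hj : ∀ ξ < omega1, j ξ ⊆ A ∧ (j ξ).Countable) :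
    ∃ N : Ordinal.{u} → Set α,
      (∀ ξ < omega1, N ξ ∈ C ∧ j ξ ⊆ N ξ) ∧ MonotoneOn N (Iio omega1) := by
  choose! next hnextC hnext using hC.2.1
  set N := transfiniteChain next j
  have hN : ∀ ξ < omega1, N ξ ∈ C ∧ (⋃ η < ξ, N η) ∪ j ξ ⊆ N ξ := by
    intro ξ hξ
    induction ξ using WellFoundedLT.induction with | _ ξ IH =>
    have hprevC : ∀ η < ξ, N η ∈ C := fun η hη => (IH η hη (hη.trans hξ)).1
    have hprevA : (⋃ η < ξ, N η) ∪ j ξ ⊆ A :=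
      union_subset (iUnion₂_subset fun η hη => (hC.1 _ (hprevC η hη)).1) (hj ξ hξ).1
    have hprevc : ((⋃ η < ξ, N η) ∪ j ξ).Countable :=
      ((countable_Iio_of_lt_omega1 hξ).biUnion fun η hη => (hC.1 _ (hprevC η hη)).2).union
        (hj ξ hξ).2
    rw [show N ξ = _ from transfiniteChain_eq next j ξ]
    exact ⟨hnextC _ hprevA hprevc, hnext _ hprevA hprevc⟩
  refine ⟨N, fun ξ hξ => ⟨(hN ξ hξ).1, subset_union_right.trans (hN ξ hξ).2⟩,
    fun η _ ξ hξ hηξ => ?_⟩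
  rcases hηξ.eq_or_lt with rfl | hlt
  · exact le_rfl
  · exact (subset_biUnion_of_mem (u := N) hlt).trans (subset_union_left.trans (hN ξ hξ).2)

theorem ClubOn.biUnion_mem (hC : ClubOn A C) {N : Ordinal.{u} → Set α} {δ : Ordinal.{u}}
    (hδ : δ < omega1) (hδ0 : 0 < δ) (hN : ∀ ξ < δ, N ξ ∈ C) (hmono : MonotoneOn N (Iio δ)) :
    (⋃ ξ < δ, N ξ) ∈ C := by
  obtain ⟨f, hf⟩ := (countable_Iio_of_lt_omega1 hδ).exists_eq_range ⟨0, hδ0⟩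
  have hfδ : ∀ n, f n < δ := fun n => (hf ▸ mem_range_self n : f n ∈ Iio δ)
  have hsup : ∀ n, partialSups f n < δ := fun n =>
    (partialSups_iff_forall (· < δ) max_lt_iff).2 fun m _ => hfδ m
  have hunion : (⋃ ξ < δ, N ξ) = ⋃ n, N (partialSups f n) := by
    refine Subset.antisymm (iUnion₂_subset fun ξ hξ => ?_)
      (iUnion_subset fun n => subset_biUnion_of_mem (u := N) (hsup n))
    obtain ⟨n, rfl⟩ : ξ ∈ range f := hf ▸ hξ
    exact (hmono (hfδ n) (hsup n) (le_partialSups f n)).trans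
      (subset_iUnion (fun n => N (partialSups f n)) n)
  rw [hunion]
  exact hC.2.2 _ (fun n => hN _ (hsup n))
    fun m n hmn => hmono (hsup m) (hsup n) ((partialSups f).monotone hmn)

theorem ClubOn.eventually_biUnion_mem (hC : ClubOn A C) {N : Ordinal.{u} → Set α}
    (hN : ∀ ξ < omega1, N ξ ∈ C) (hmono : MonotoneOn N (Iio omega1)) :
    ∀ᶠ δ in clubFilter, (⋃ ξ < δ, N ξ) ∈ C := by
  filter_upwards [eventually_pos_lt_omega1] with δ ⟨hδ0, hδ⟩
  exact hC.biUnion_mem hδ hδ0 (fun ξ hξ => hN ξ (hξ.trans hδ))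
    (hmono.mono (Iio_subset_Iio hδ.le))

end Chain

theorem eventually_biUnion_inter_Iio_omega1_eq {N : Ordinal.{u} → Set Ordinal.{u}}
    (hN : ∀ ξ < omega1, (N ξ).Countable ∧ Iic ξ ⊆ N ξ) :
    ∀ᶠ δ in clubFilter, (⋃ ξ < δ, N ξ) ∩ Iio omega1 = Iio δ := by
  have hbound := eventually_biUnion_subset_image (N := fun ξ => N ξ ∩ Iio omega1) (y := id)
    fun ξ hξ => ⟨(hN ξ hξ).1.mono inter_subset_left, by rw [image_id]; exact inter_subset_right⟩
  filter_upwards [hbound, eventually_pos_lt_omega1] with δ hδN ⟨_, hδ⟩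
  refine Subset.antisymm ?_ fun x hx =>
    ⟨mem_biUnion hx ((hN x (hx.trans hδ)).2 (mem_Iic.2 le_rfl)), hx.trans hδ⟩
  rw [iUnion₂_inter]
  simpa using hδN

theorem exists_isAntichain_superset_forall_exists_rel {β : Type w} {p : β → Prop}
    {r : β → β → Prop} (hr : ∀ a b, r a b → r b a) (hp : ∀ a, p a → r a a) {s₀ : Set β}
    (hs₀p : ∀ a ∈ s₀, p a) (hs₀ : IsAntichain r s₀) :
    ∃ s, s₀ ⊆ s ∧ (∀ a ∈ s, p a) ∧ IsAntichain r s ∧ ∀ a, p a → ∃ b ∈ s, r a b := by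
  obtain ⟨s, hs₀s, hmax⟩ := zorn_subset_nonempty {s | (∀ a ∈ s, p a) ∧ IsAntichain r s}
    (fun c hc hchain _ => ⟨⋃₀ c, ⟨fun a ⟨t, ht, ha⟩ => (hc ht).1 a ha,
      (pairwise_sUnion hchain.directedOn).2 fun t ht => (hc ht).2⟩,
      fun _ => subset_sUnion_of_mem⟩) s₀ ⟨hs₀p, hs₀⟩
  refine ⟨s, hs₀s, hmax.prop.1, hmax.prop.2, fun a ha => ?_⟩
  by_contra! hsa
  have hins : insert a s ⊆ s := hmax.2
    ⟨forall_mem_insert.2 ⟨ha, hmax.prop.1⟩,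
      hmax.prop.2.insert (fun b hb _ h => hsa b hb (hr b a h)) fun b hb _ => hsa b hb⟩
    (subset_insert a s)
  exact hsa a (hins (mem_insert a s)) (hp a ha)

theorem exists_forall_mem_subset_image {β γ : Type w} {s : Set β} {t : Set γ}
    (hs : s.Nonempty) (h : #s ≤ #t) : ∃ g : γ → β, (∀ x, g x ∈ s) ∧ s ⊆ g '' t := by
  obtain ⟨ι⟩ := (Cardinal.le_def _ _).1 h
  have : Nonempty s := hs.to_subtype
  set f : s → γ := fun a => ι a
  have hf : Function.Injective f := Subtype.val_injective.comp ι.injective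
  exact ⟨fun x => (Function.invFun f x).1, fun x => (Function.invFun f x).2,
    fun b hb => ⟨f ⟨b, hb⟩, (ι ⟨b, hb⟩).2,
      congrArg Subtype.val (Function.leftInverse_invFun hf ⟨b, hb⟩)⟩⟩

theorem Set.InjOn.exists_mem_notMem_of_mk_lt {β γ : Type w} {f : β → γ} {s : Set β}
    {t : Set γ} (hf : InjOn f s) (h : #t < #s) : ∃ x ∈ s, f x ∉ t := by
  by_contra! hst
  exact h.not_ge (mk_image_eq_of_injOn f s hf ▸ mk_le_mk_of_subset (image_subset_iff.2 hst))

/-- The set `Z` of the sketch above. -/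
def guessSets (lam : Ordinal.{u}) (g : Ordinal.{u} → Set Ordinal.{u}) :
    Set (Set Ordinal.{u}) :=
  {σ | σ ⊆ Iio lam ∧ σ.Countable ∧ ∃ δ, σ ∩ Iio omega1 = Iio δ ∧ ∃ β ∈ σ, δ ∈ g β}

theorem stationaryOn_guessSets {lam : Ordinal.{u}} {g : Ordinal.{u} → Set Ordinal.{u}}
    (hlam : omega1 ≤ lam)
    (hg : ∀ T, OrdStationary omega1 T → ∃ β < lam, OrdStationary omega1 (T ∩ g β))
    {T : Set Ordinal.{u}} (hT : OrdStationary omega1 T) :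
    StationaryOn (Iio lam) {σ ∈ guessSets lam g | ∃ δ ∈ T, σ ∩ Iio omega1 = Iio δ} := by
  intro C hC
  obtain ⟨β, hβ, hTg⟩ := hg T hT
  obtain ⟨N, hN, hmono⟩ := hC.exists_chain (j := fun ξ => insert β (Iic ξ)) fun ξ hξ =>
    ⟨insert_subset hβ fun x hx => (mem_Iic.1 hx |>.trans_lt hξ).trans_le hlam,
      (countable_Iic_of_lt_omega1 hξ).insert β⟩
  obtain ⟨δ, ⟨hδT, hδg⟩, ⟨hδ0, hδ⟩, hτC, hτ⟩ := (hTg.frequently_mem.and_eventually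
    (eventually_pos_lt_omega1.and
      ((hC.eventually_biUnion_mem (fun ξ hξ => (hN ξ hξ).1) hmono).and
        (eventually_biUnion_inter_Iio_omega1_eq fun ξ hξ =>
          ⟨(hC.1 _ (hN ξ hξ).1).2, (subset_insert _ _).trans (hN ξ hξ).2⟩)))).exists
  have hβτ : β ∈ ⋃ ξ < δ, N ξ := mem_biUnion hδ0 ((hN 0 (hδ0.trans hδ)).2 (mem_insert β _))
  exact ⟨_, ⟨⟨(hC.1 _ hτC).1, (hC.1 _ hτC).2, δ, hτ, β, hβτ, hδg⟩, δ, hδT, hτ⟩, hτC⟩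

theorem ClubOn.exists_ordStationary_inter_of_subset_guessSets {lam : Ordinal.{u}}
    {g : Ordinal.{u} → Set Ordinal.{u}} {Y : Set Ordinal.{u}} {D : Set (Set Ordinal.{u})}
    (hD : ClubOn Y D) (hDg : D ⊆ guessSets lam g) (hY : Iio omega1 ⊆ Y) (hYcard : #Y ≤ ℵ₁)
    {S : Set Ordinal.{u}} (hS : OrdStationary omega1 S) :
    ∃ y ∈ Y, OrdStationary omega1 (S ∩ g y) := by
  by_contra! hSg
  obtain ⟨y, hyY, hYy⟩ := exists_forall_mem_subset_image (t := Iio omega1)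
    ⟨0, hY omega1_isSuccLimit.pos⟩ (mk_Iio_omega1 ▸ hYcard)
  obtain ⟨N, hN, hmono⟩ := hD.exists_chain (j := Iic) fun ξ hξ =>
    ⟨fun x hx => hY ((mem_Iic.1 hx).trans_lt hξ), countable_Iic_of_lt_omega1 hξ⟩
  have hNc : ∀ ξ < omega1, (N ξ).Countable ∧ N ξ ⊆ Y := fun ξ hξ =>
    ⟨(hD.1 _ (hN ξ hξ).1).2, (hD.1 _ (hN ξ hξ).1).1⟩
  obtain ⟨δ, hδS, hτD, hτ, hτy, hδg⟩ := (hS.frequently_mem.and_eventually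
    ((hD.eventually_biUnion_mem (fun ξ hξ => (hN ξ hξ).1) hmono).and
      ((eventually_biUnion_inter_Iio_omega1_eq fun ξ hξ => ⟨(hNc ξ hξ).1, (hN ξ hξ).2⟩).and
        ((eventually_biUnion_subset_image fun ξ hξ =>
            ⟨(hNc ξ hξ).1, (hNc ξ hξ).2.trans hYy⟩).and
          (eventually_forall_lt_of_forall_eventually fun η _ =>
            eventually_notMem_of_not_ordStationary (inter_subset_left.trans hS.1)
              (hSg _ (hyY η))))))).exists
  obtain ⟨-, -, δ', hδ', β, hβ, hδ'g⟩ := hDg hτD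
  obtain ⟨η, hη, rfl⟩ := hτy hβ
  rw [hτ, Iio_inj] at hδ'
  exact hδg η hη ⟨hδS, hδ' ▸ hδ'g⟩

theorem mk_powerset_Iio_omega1_le {κ : Cardinal.{u}} (hκ : 2 ^ ℵ₁ ≤ κ) :
    #(𝒫 Iio omega1.{u}) ≤ #(Iio κ.ord) := by
  rw [mk_powerset, mk_Iio_omega1, Cardinal.mk_Iio_ordinal, card_ord]
  simpa using Cardinal.lift_le.{u + 1}.2 hκ

/-- SRP implies that the non-stationary ideal on `ω₁` is saturated: there is no family
`{A_α : α < ω₂}` of stationary subsets of `ω₁` with `A_α ∩ A_β` non-stationary for `α ≠ β`. -/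
theorem srp_implies_ns_saturated (hSRP : SRP.{u}) :
    ¬ ∃ A : Ordinal.{u} → Set Ordinal.{u},
      (∀ α < (Cardinal.aleph 2).ord, OrdStationary omega1 (A α)) ∧
      (∀ α < (Cardinal.aleph 2).ord, ∀ β < (Cardinal.aleph 2).ord, α ≠ β →
        ¬ OrdStationary omega1 (A α ∩ A β)) := by
  rintro ⟨A, hstat, hdisj⟩
  have hAinj : InjOn A (Iio (aleph 2).ord) := fun α hα β hβ hAB => by
    by_contra hne
    exact hdisj α hα β hβ hne (by rw [hAB, inter_self]; exact hstat β hβ)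
  obtain ⟨𝒜, hA𝒜, h𝒜stat, h𝒜anti, h𝒜max⟩ := exists_isAntichain_superset_forall_exists_rel
    (r := fun s t => OrdStationary omega1 (s ∩ t)) (fun s t h => by simpa only [inter_comm] using h)
    (fun s hs => (inter_self s).symm ▸ hs) (forall_mem_image.2 hstat)
    (hAinj.pairwise_image.2 fun α hα β hβ hne => hdisj α hα β hβ hne)
  set lam : Cardinal.{u} := max (aleph 2) (2 ^ aleph 1)
  have hlam : omega1 ≤ lam.ord :=
    ord_le_ord.2 ((aleph_le_aleph.2 one_le_two).trans (le_max_left _ _))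
  obtain ⟨g, hg𝒜, h𝒜g⟩ := exists_forall_mem_subset_image (t := Iio lam.ord)
    ⟨A 0, hA𝒜 ⟨0, (isSuccLimit_ord (aleph0_le_aleph 2)).pos, rfl⟩⟩
    ((mk_le_mk_of_subset fun s hs => (h𝒜stat s hs).1).trans
      (mk_powerset_Iio_omega1_le (le_max_right _ _)))
  obtain ⟨Y, hXY, -, hYcard, D, hDg, hD⟩ := hSRP lam (le_max_left _ _) (guessSets lam.ord g)
    (fun σ hσ => ⟨hσ.1, hσ.2.1⟩)
    (fun T hT => stationaryOn_guessSets hlam (fun T hT => by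
      obtain ⟨s, hs, hTs⟩ := h𝒜max T hT
      obtain ⟨β, hβ, rfl⟩ := h𝒜g hs
      exact ⟨β, hβ, hTs⟩) hT)
    (Iio omega1) (fun x hx => hx.trans_le hlam) mk_Iio_omega1
  obtain ⟨γ, hγ, hγY⟩ := hAinj.exists_mem_notMem_of_mk_lt (t := g '' Y) <| by
    rw [Cardinal.mk_Iio_ordinal, card_ord, lift_aleph]
    exact mk_image_le.trans_lt (hYcard ▸ aleph_lt_aleph.2 (by simp))
  obtain ⟨y, hy, hAy⟩ := hD.exists_ordStationary_inter_of_subset_guessSets hDg hXY hYcard.le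
    (hstat γ hγ)
  exact h𝒜anti (hA𝒜 (mem_image_of_mem A hγ)) (hg𝒜 y)
    (fun h => hγY (h ▸ mem_image_of_mem g hy)) hAy
end

section
/- Assume the P-ideal Dichotomy (PID). Then every locally compact Hausdorff space X satisfies at least one of: (1) X is the union of countably many ω-bounded subspaces; (2) X has an uncountable closed discrete subspace; (3) X has a separable subspace whose closure is not Lindelöf. -/
universe u

/-- The P-ideal Dichotomy (PID): for every uncountable set `X` and every P-ideal `I` of countable
subsets of `X` (downward closed, and such that every countable subfamily is almost included in a
single member), either there is an uncountable `A ⊆ X` all of whose countable subsets are in `I`,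
or `X` is a countable union of sets orthogonal to `I`. -/
def PID : Prop :=
  ∀ (X : Type u), Uncountable X → ∀ I : Set (Set X),
    (∀ s ∈ I, s.Countable) →
    (∀ s ∈ I, ∀ t ⊆ s, t ∈ I) →
    (∀ f : ℕ → Set X, (∀ n, f n ∈ I) → ∃ J ∈ I, ∀ n, (f n \ J).Finite) →
    (∃ A : Set X, ¬ A.Countable ∧ ∀ B ⊆ A, B.Countable → B ∈ I) ∨
    (∃ B : ℕ → Set X, (⋃ n, B n) = Set.univ ∧ ∀ n, ∀ s ∈ I, (B n ∩ s).Finite)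

/-- A subspace `A` of a topological space is ω-bounded if every countable subset of `A` has
compact closure in `A` (the closure being taken in the subspace `A`). -/
def OmegaBounded {X : Type u} [TopologicalSpace X] (A : Set X) : Prop :=
  ∀ B ⊆ A, B.Countable → IsCompact (closure B ∩ A)

/-!
If some countable set has non-Lindelöf closure, the third alternative holds. Otherwise the
countable closed discrete sets form a P-ideal: given closed discrete sets `s n`, exhaust the
Lindelöf closure of their union by compacta `K n`; then `⋃ n, s n \ K n` is closed discrete and
almost contains every `s n`. If PID yields an uncountable set all of whose countable subsets are
closed discrete, local compactness makes the set itself closed discrete. Otherwise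
`X = ⋃ n, B n` with each `B n` meeting every countable closed discrete set finitely. A countable
`C ⊆ B n` then has compact closure, since a sequence in `C` escaping the compacta exhausting
`closure C` would be an infinite closed discrete subset of `B n`; so the closures of the countable
subsets of `B n` make up an ω-bounded set.
-/

open Set Filter Topology

section ClosedDiscrete

variable {X : Type u} [TopologicalSpace X]

theorem IsCompact.finite_inter_of_isDiscrete {K s : Set X} (hK : IsCompact K) (hs : IsClosed s)
    (hd : IsDiscrete s) : (K ∩ s).Finite :=
  (hK.inter_right hs).finite (hd.mono inter_subset_right)

theorem isClosed_isDiscrete_of_forall_mem_closure [T1Space X] {s : Set X}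
    (h : ∀ x ∈ closure s, ∃ U ∈ 𝓝 x, (U ∩ s).Finite) : IsClosed s ∧ IsDiscrete s := by
  rw [← compl_mem_codiscrete_iff, codiscrete, codiscreteWithin_iff_locallyFiniteComplementWithin]
  intro x _
  rw [← compl_eq_univ_sdiff, compl_compl]
  by_cases hx : x ∈ closure s
  · exact h x hx
  · refine ⟨(closure s)ᶜ, isClosed_closure.compl_mem_nhds hx, ?_⟩
    rw [(disjoint_compl_left_iff_subset.2 subset_closure).inter_eq]
    exact finite_empty

theorem IsLindelof.exists_monotone_isCompact_subset_iUnion_interior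
    [WeaklyLocallyCompactSpace X] {F : Set X} (hF : IsLindelof F) :
    ∃ K : ℕ → Set X, Monotone K ∧ (∀ m, IsCompact (K m)) ∧ F ⊆ ⋃ m, interior (K m) := by
  rcases isEmpty_or_nonempty X with hX | hX
  · exact ⟨fun _ => ∅, monotone_const, fun _ => isCompact_empty, fun x _ => isEmptyElim x⟩
  choose N hNc hN using exists_compact_mem_nhds (X := X)
  obtain ⟨f, hf⟩ := hF.indexed_countable_subcover (fun x => interior (N x))
    (fun _ => isOpen_interior) fun x _ => mem_iUnion.2 ⟨x, mem_interior_iff_mem_nhds.2 (hN x)⟩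
  exact ⟨accumulate (N ∘ f), monotone_accumulate, isCompact_accumulate fun n => hNc _,
    hf.trans <| iUnion_mono fun n => interior_mono (subset_accumulate (s := N ∘ f))⟩

variable [T1Space X] {K : ℕ → Set X}

theorem isClosed_isDiscrete_iUnion_sdiff (hK : Monotone K) (hKc : ∀ m, IsCompact (K m))
    {s : ℕ → Set X} (hs : ∀ n, IsClosed (s n) ∧ IsDiscrete (s n))
    (hcover : closure (⋃ n, s n) ⊆ ⋃ m, interior (K m)) :
    IsClosed (⋃ n, s n \ K n) ∧ IsDiscrete (⋃ n, s n \ K n) := by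
  refine isClosed_isDiscrete_of_forall_mem_closure fun x hx => ?_
  obtain ⟨m, hm⟩ := mem_iUnion.1 (hcover (closure_mono (iUnion_mono fun n => sdiff_subset) hx))
  refine ⟨K m, mem_interior_iff_mem_nhds.1 hm, ((finite_Iio m).biUnion
    fun n _ => (hKc m).finite_inter_of_isDiscrete (hs n).1 (hs n).2).subset ?_⟩
  rintro y ⟨hyK, hy⟩
  obtain ⟨n, hyn, hyKn⟩ := mem_iUnion.1 hy
  exact mem_biUnion (not_le.1 fun hmn => hyKn (hK hmn hyK)) ⟨hyK, hyn⟩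

theorem exists_isClosed_isDiscrete_almost_superset [WeaklyLocallyCompactSpace X]
    {s : ℕ → Set X} (hs : ∀ n, IsClosed (s n) ∧ IsDiscrete (s n))
    (hL : IsLindelof (closure (⋃ n, s n))) :
    ∃ J ⊆ ⋃ n, s n, (IsClosed J ∧ IsDiscrete J) ∧ ∀ n, (s n \ J).Finite := by
  obtain ⟨K, hK, hKc, hcover⟩ := hL.exists_monotone_isCompact_subset_iUnion_interior
  refine ⟨⋃ n, s n \ K n, iUnion_mono fun n => sdiff_subset,
    isClosed_isDiscrete_iUnion_sdiff hK hKc hs hcover, fun n => ?_⟩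
  refine ((hKc n).finite_inter_of_isDiscrete (hs n).1 (hs n).2).subset fun y ⟨hys, hyJ⟩ => ?_
  by_contra hyK
  exact hyJ (mem_iUnion.2 ⟨n, hys, fun h => hyK ⟨h, hys⟩⟩)

theorem isCompact_closure_of_forall_isDiscrete_finite [T2Space X] [WeaklyLocallyCompactSpace X]
    {C : Set X} (hC : IsLindelof (closure C))
    (hfin : ∀ s ⊆ C, IsClosed s → IsDiscrete s → s.Finite) : IsCompact (closure C) := by
  obtain ⟨K, hK, hKc, hcover⟩ := hC.exists_monotone_isCompact_subset_iUnion_interior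
  by_contra hnc
  have hesc : ∀ m, ¬ C ⊆ K m := fun m h =>
    hnc ((hKc m).of_isClosed_subset isClosed_closure (closure_minimal h (hKc m).isClosed))
  choose c hcC hcK using fun m => not_subset.1 (hesc m)
  have hrange : range c ⊆ closure C := range_subset_iff.2 fun n => subset_closure (hcC n)
  have hdisc : IsClosed (range c) ∧ IsDiscrete (range c) := by
    have hsdiff : ∀ n, {c n} \ K n = {c n} := fun n => by simpa using hcK n
    have := isClosed_isDiscrete_iUnion_sdiff hK hKc (s := fun n => {c n})
      (fun n => ⟨isClosed_singleton, subsingleton_singleton.isDiscrete⟩)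
      (by rw [iUnion_singleton_eq_range]
          exact (closure_minimal hrange isClosed_closure).trans hcover)
    simpa only [hsdiff, iUnion_singleton_eq_range] using this
  have hcpt : IsCompact (range c) :=
    (hfin _ (range_subset_iff.2 hcC) hdisc.1 hdisc.2).isCompact
  obtain ⟨M, hM⟩ := hcpt.elim_directed_cover _ (fun _ => isOpen_interior) (hrange.trans hcover)
    (Monotone.directed_le fun _ _ h => interior_mono (hK h))
  exact hcK M (interior_subset (hM ⟨M, rfl⟩))

theorem isClosed_isDiscrete_of_forall_countable_subset [WeaklyLocallyCompactSpace X]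
    {A : Set X} (hA : ∀ B ⊆ A, B.Countable → IsClosed B ∧ IsDiscrete B) :
    IsClosed A ∧ IsDiscrete A := by
  refine isClosed_isDiscrete_of_forall_mem_closure fun x _ => ?_
  obtain ⟨N, hNc, hN⟩ := exists_compact_mem_nhds x
  refine ⟨N, hN, not_infinite.1 fun hinf => ?_⟩
  obtain ⟨B, hB, hBc, hBinf⟩ := hinf.exists_subset_countable_infinite
  obtain ⟨hBcl, hBd⟩ := hA B (hB.trans inter_subset_right) hBc
  exact hBinf ((hNc.finite_inter_of_isDiscrete hBcl hBd).subset
    (subset_inter (hB.trans inter_subset_left) subset_rfl))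

end ClosedDiscrete

section CountableClosure

variable {X : Type u} [TopologicalSpace X]

def countableClosure (B : Set X) : Set X :=
  {x | ∃ C ⊆ B, C.Countable ∧ x ∈ closure C}

theorem subset_countableClosure (B : Set X) : B ⊆ countableClosure B :=
  fun x hx => ⟨{x}, singleton_subset_iff.2 hx, countable_singleton x, subset_closure rfl⟩

theorem omegaBounded_countableClosure {B : Set X}
    (hB : ∀ C ⊆ B, C.Countable → IsCompact (closure C)) : OmegaBounded (countableClosure B) := by
  intro D hD hDc
  have hD' : ∀ x ∈ D, ∃ C ⊆ B, C.Countable ∧ x ∈ closure C := hD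
  choose! Cf hCfB hCfc hxCf using hD'
  set C := ⋃ x ∈ D, Cf x
  have hCB : C ⊆ B := iUnion₂_subset fun x hx => hCfB x hx
  have hCc : C.Countable := hDc.biUnion fun x hx => hCfc x hx
  have hDC : closure D ⊆ closure C := closure_minimal
    (fun x hx => closure_mono (subset_biUnion_of_mem (u := Cf) hx) (hxCf x hx)) isClosed_closure
  have hDB : closure D ⊆ countableClosure B := fun x hx => ⟨C, hCB, hCc, hDC hx⟩
  rw [inter_eq_left.2 hDB]
  exact (hB C hCB hCc).of_isClosed_subset isClosed_closure hDC

end CountableClosure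

theorem PID.closedDiscrete_dichotomy (hPID : PID.{u}) {X : Type u} [TopologicalSpace X]
    [T1Space X] [WeaklyLocallyCompactSpace X]
    (hL : ∀ c : Set X, c.Countable → IsLindelof (closure c)) :
    (∃ A : Set X, ¬ A.Countable ∧ ∀ B ⊆ A, B.Countable → IsClosed B ∧ IsDiscrete B) ∨
    (∃ B : ℕ → Set X, (⋃ n, B n) = univ ∧
      ∀ n s, s.Countable → IsClosed s → IsDiscrete s → (B n ∩ s).Finite) := by
  by_cases hX : Countable X
  · obtain ⟨f, hf⟩ := Countable.exists_injective_nat X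
    refine Or.inr ⟨fun n => f ⁻¹' {n}, eq_univ_of_forall fun x => mem_iUnion.2 ⟨f x, rfl⟩,
      fun n s _ _ _ => Subsingleton.finite fun x hx y hy => hf ?_⟩
    exact hx.1.trans hy.1.symm
  set I : Set (Set X) := {s | s.Countable ∧ IsClosed s ∧ IsDiscrete s}
  have hI_down : ∀ s ∈ I, ∀ t ⊆ s, t ∈ I := fun s ⟨hsc, hs, hd⟩ t hts =>
    ⟨hsc.mono hts, isClosed_of_subset_discrete_closed hts hd hs, hd.mono hts⟩
  have hI_almost : ∀ s : ℕ → Set X, (∀ n, s n ∈ I) → ∃ J ∈ I, ∀ n, (s n \ J).Finite := by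
    intro s hs
    have hsc : (⋃ n, s n).Countable := countable_iUnion fun n => (hs n).1
    obtain ⟨J, hJs, hJ, hsJ⟩ :=
      exists_isClosed_isDiscrete_almost_superset (fun n => (hs n).2) (hL _ hsc)
    exact ⟨J, ⟨hsc.mono hJs, hJ⟩, hsJ⟩
  rcases hPID X (not_countable_iff.1 hX) I (fun s hs => hs.1) hI_down hI_almost with
    ⟨A, hA, hAI⟩ | ⟨B, hB, hBI⟩
  · exact Or.inl ⟨A, hA, fun B hBA hBc => (hAI B hBA hBc).2⟩
  · exact Or.inr ⟨B, hB, fun n s hsc hs hd => hBI n s ⟨hsc, hs, hd⟩⟩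

/-- PID implies that every locally compact Hausdorff space either is the union of countably many
ω-bounded subspaces, or has an uncountable closed discrete subspace, or has a separable subspace
whose closure is not Lindelöf. -/
theorem pid_implies_ent (hPID : PID.{u})
    (X : Type u) [TopologicalSpace X] [LocallyCompactSpace X] [T2Space X] :
    (∃ A : ℕ → Set X, (⋃ n, A n) = Set.univ ∧ ∀ n, OmegaBounded (A n)) ∨
    (∃ D : Set X, ¬ D.Countable ∧ IsClosed D ∧ DiscreteTopology D) ∨
    (∃ S : Set X, (∃ c ⊆ S, c.Countable ∧ S ⊆ closure c) ∧ ¬ IsLindelof (closure S)) := by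
  by_cases hS : ∃ S : Set X, (∃ c ⊆ S, c.Countable ∧ S ⊆ closure c) ∧ ¬ IsLindelof (closure S)
  · exact Or.inr (Or.inr hS)
  push Not at hS
  have hL : ∀ c : Set X, c.Countable → IsLindelof (closure c) :=
    fun c hc => hS c ⟨c, subset_rfl, hc, subset_closure⟩
  rcases hPID.closedDiscrete_dichotomy hL with ⟨A, hAc, hA⟩ | ⟨B, hBu, hB⟩
  · obtain ⟨hAcl, hAd⟩ := isClosed_isDiscrete_of_forall_countable_subset hA
    exact Or.inr (Or.inl ⟨A, hAc, hAcl, hAd.to_subtype⟩)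
  · refine Or.inl ⟨fun n => countableClosure (B n),
      univ_subset_iff.1 (hBu ▸ iUnion_mono fun n => subset_countableClosure (B n)),
      fun n => omegaBounded_countableClosure fun C hCB hCc => ?_⟩
    exact isCompact_closure_of_forall_isDiscrete_finite (hL C hCc) fun s hsC hs hd =>
      (hB n s (hCc.mono hsC) hs hd).subset (subset_inter (hsC.trans hCB) subset_rfl)
end
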